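/- Let ε ∈ (0, 1/2] and let d ≥ 1 be an integer. Let (V, r, par) be a finite rooted tree in which every node has at most d children, with capacities B : V → ℕ, and let (A_v)_{v ∈ V} be mutually independent ℕ-valued random variables on a probability space such that E[exp(ε(A_v − B_v))] ≤ ε²/(e·d) for every v ∈ V. Then for every node v ∈ V, the probability that L_v(A) ≥ B_v is at most ε. -/

import Mathlib

open MeasureTheory ProbabilityTheory

variable {V : Type*} [Fintype V] [DecidableEq V]

/-- The children of `v` in the rooted tree with parent map `par` (the root is encoded by
`par r = r`, so it is not a child of itself). -/
def children (par : V → V) (v : V) : Finset V :=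
  Finset.univ.filter (fun u => par u = v ∧ u ≠ v)

/-- Fuel-indexed auxiliary recursion computing the forwarded counts
`F_v(a) = max(a_v + Σ_{u child of v} F_u(a) − B_v, 0)` (truncated `ℕ` subtraction realizes
the `max(· , 0)`).  In a finite rooted tree every branch has length less than `card V`, so
fuel `card V` computes the structurally recursive value at every node. -/
def forwardAux (par : V → V) (B a : V → ℕ) : ℕ → V → ℕ
  | 0, v => a v - B v
  | n + 1, v => a v + (∑ u ∈ children par v, forwardAux par B a n u) - B v

/-- The forwarded count `F_v(a)` at node `v`. -/
def forwardF (par : V → V) (B a : V → ℕ) (v : V) : ℕ :=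
  forwardAux par B a (Fintype.card V) v

/-- The load `L_v(a) = a_v + Σ_{u child of v} F_u(a)` at node `v`. -/
def load (par : V → V) (B a : V → ℕ) (v : V) : ℕ :=
  a v + ∑ u ∈ children par v, forwardF par B a u

open scoped ENNReal

/-! Write `M_v = 𝔼[exp (ε (L_v - B_v))]`. The load `L_v` is `A_v` plus the forwarded counts
`F_u` of the children `u`, and `F_u` only sees the arrivals in the subtree of `u`; these subtrees
are pairwise disjoint and miss `v`, so independence factorizes
`M_v = 𝔼[exp (ε (A_v - B_v))] · ∏_u 𝔼[exp (ε F_u)]`. Since `F_u = (L_u - B_u)⁺`, we have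
`𝔼[exp (ε F_u)] ≤ 1 + M_u`, and induction from the leaves gives
`M_v ≤ ε² / (e d) · (1 + ε / d) ^ d ≤ ε² / (e d) · e ^ ε ≤ ε / d`.
Markov's inequality then bounds `P(L_v ≥ B_v)` by `M_v`. -/

structure IsRootedTree {α : Type*} (par : α → α) (r : α) : Prop where
  par_root : par r = r
  exists_iterate_eq_root : ∀ v, ∃ n, par^[n] v = r

namespace IsRootedTree

section Depth

variable {α : Type*} [DecidableEq α] {par : α → α} {r : α}

def depth (ht : IsRootedTree par r) (v : α) : ℕ :=
  Nat.find (ht.exists_iterate_eq_root v)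

theorem iterate_depth (ht : IsRootedTree par r) (v : α) : par^[ht.depth v] v = r :=
  Nat.find_spec (ht.exists_iterate_eq_root v)

theorem depth_le_of_iterate (ht : IsRootedTree par r) {v : α} {n : ℕ} (h : par^[n] v = r) :
    ht.depth v ≤ n :=
  Nat.find_min' _ h

theorem depth_par_add_one (ht : IsRootedTree par r) {v : α} (hv : v ≠ r) :
    ht.depth (par v) + 1 = ht.depth v := by
  obtain ⟨m, hm⟩ := Nat.exists_eq_succ_of_ne_zero fun h0 : ht.depth v = 0 =>
    hv (by simpa [h0] using ht.iterate_depth v)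
  have hle : ht.depth (par v) ≤ m := ht.depth_le_of_iterate <| by
    rw [← Function.iterate_succ_apply, ← hm, ht.iterate_depth]
  have hge : ht.depth v ≤ ht.depth (par v) + 1 := ht.depth_le_of_iterate <| by
    rw [Function.iterate_succ_apply, ht.iterate_depth]
  omega

theorem depth_eq_add_of_iterate (ht : IsRootedTree par r) {k : ℕ} {w u : α}
    (h : par^[k] w = u) (hu : u ≠ r) : ht.depth w = ht.depth u + k := by
  induction k generalizing w with
  | zero => simp [← h]
  | succ k ih =>
    have hw : w ≠ r := by
      rintro rfl
      exact hu (h ▸ Function.iterate_fixed ht.par_root _)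
    rw [← ht.depth_par_add_one hw, ih h, add_assoc]

theorem depth_lt_card [Fintype α] (ht : IsRootedTree par r) (v : α) :
    ht.depth v < Fintype.card α := by
  have hinj : Function.Injective fun i : Fin (ht.depth v + 1) => par^[i] v := by
    intro i j hij
    simp only at hij
    have := i.is_lt
    have := j.is_lt
    ext
    by_cases hr : par^[i] v = r
    · have := ht.depth_le_of_iterate hr
      have := ht.depth_le_of_iterate (hij ▸ hr)
      omega
    · have := ht.depth_eq_add_of_iterate rfl hr
      have := ht.depth_eq_add_of_iterate hij.symm hr
      omega
  simpa using Fintype.card_le_of_injective _ hinj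

end Depth

end IsRootedTree

section Descendants

variable {α : Type*} [Fintype α]

open Classical in
noncomputable def descendants (par : α → α) (v : α) : Finset α :=
  {w | ∃ k, par^[k] w = v}

theorem mem_descendants {par : α → α} {v w : α} :
    w ∈ descendants par v ↔ ∃ k, par^[k] w = v := by
  simp [descendants]

theorem self_mem_descendants (par : α → α) (v : α) : v ∈ descendants par v :=
  mem_descendants.2 ⟨0, rfl⟩

end Descendants

@[simp]
theorem mem_children {par : V → V} {u v : V} : u ∈ children par v ↔ par u = v ∧ u ≠ v := by
  simp [children]

theorem descendants_subset_of_mem_children {par : V → V} {u v : V}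
    (hu : u ∈ children par v) : descendants par u ⊆ descendants par v := by
  intro w hw
  obtain ⟨k, hk⟩ := mem_descendants.1 hw
  exact mem_descendants.2 ⟨k + 1, by rw [Function.iterate_succ_apply', hk, (mem_children.1 hu).1]⟩

theorem dependsOn_forwardAux (par : V → V) (B : V → ℕ) (n : ℕ) (v : V) :
    DependsOn (fun a => forwardAux par B a n v) (descendants par v : Set V) := by
  induction n generalizing v with
  | zero => exact fun a a' h => by simp [forwardAux, h v (self_mem_descendants par v)]
  | succ n ih =>
    intro a a' h
    simp only [forwardAux, h v (self_mem_descendants par v)]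
    congr 2
    exact Finset.sum_congr rfl fun u hu =>
      ih u fun x hx => h x (descendants_subset_of_mem_children hu hx)

theorem dependsOn_forwardF (par : V → V) (B : V → ℕ) (v : V) :
    DependsOn (fun a => forwardF par B a v) (descendants par v : Set V) :=
  dependsOn_forwardAux par B _ v

namespace IsRootedTree

variable {par : V → V} {r : V}

theorem ne_root_of_mem_children (ht : IsRootedTree par r) {u v : V}
    (hu : u ∈ children par v) : u ≠ r := by
  rintro rfl
  exact (mem_children.1 hu).2 ((mem_children.1 hu).1 ▸ ht.par_root).symm

theorem depth_of_mem_children (ht : IsRootedTree par r) {u v : V}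
    (hu : u ∈ children par v) : ht.depth u = ht.depth v + 1 := by
  rw [← ht.depth_par_add_one (ht.ne_root_of_mem_children hu), (mem_children.1 hu).1]

theorem notMem_descendants_of_mem_children (ht : IsRootedTree par r) {u v : V}
    (hu : u ∈ children par v) : v ∉ descendants par u := by
  intro hv
  obtain ⟨k, hk⟩ := mem_descendants.1 hv
  have := ht.depth_eq_add_of_iterate hk (ht.ne_root_of_mem_children hu)
  have := ht.depth_of_mem_children hu
  omega

theorem pairwiseDisjoint_descendants (ht : IsRootedTree par r) (v : V) :
    (children par v : Set V).PairwiseDisjoint (descendants par) := by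
  intro u₁ hu₁ u₂ hu₂ hne
  refine Finset.disjoint_left.2 fun w hw₁ hw₂ => hne ?_
  obtain ⟨k₁, hk₁⟩ := mem_descendants.1 hw₁
  obtain ⟨k₂, hk₂⟩ := mem_descendants.1 hw₂
  have := ht.depth_eq_add_of_iterate hk₁ (ht.ne_root_of_mem_children hu₁)
  have := ht.depth_eq_add_of_iterate hk₂ (ht.ne_root_of_mem_children hu₂)
  have := ht.depth_of_mem_children hu₁
  have := ht.depth_of_mem_children hu₂
  obtain rfl : k₁ = k₂ := by omega
  rw [← hk₁, ← hk₂]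

-- Every branch below `v` has fewer than `card V - depth v` nodes, so such fuel suffices.
theorem forwardAux_eq_of_card_le (ht : IsRootedTree par r) (B a : V → ℕ) {n m : ℕ} {v : V}
    (hn : Fintype.card V ≤ n + ht.depth v) (hm : Fintype.card V ≤ m + ht.depth v) :
    forwardAux par B a n v = forwardAux par B a m v := by
  induction n generalizing m v with
  | zero => have := ht.depth_lt_card v; omega
  | succ n ih =>
    obtain ⟨m, rfl⟩ : ∃ m', m = m' + 1 :=
      Nat.exists_eq_add_one.2 (by have := ht.depth_lt_card v; omega)
    simp only [forwardAux]
    congr 2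
    refine Finset.sum_congr rfl fun u hu => ?_
    have := ht.depth_of_mem_children hu
    exact ih (by omega) (by omega)

theorem forwardF_eq_load_sub (ht : IsRootedTree par r) (B a : V → ℕ) (v : V) :
    forwardF par B a v = load par B a v - B v := by
  obtain ⟨n, hn⟩ := Nat.exists_eq_add_one.2 (Fintype.card_pos_iff.2 ⟨r⟩)
  rw [forwardF, load, hn, forwardAux]
  congr 2
  refine Finset.sum_congr rfl fun u hu => ht.forwardAux_eq_of_card_le B a ?_ ?_
  · have := ht.depth_of_mem_children hu; omega
  · have := ht.depth_of_mem_children hu; omega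

end IsRootedTree

theorem dependsOn_finset_prod {ι κ β M : Type*} [DecidableEq ι] [CommMonoid M]
    {S : κ → Finset ι} {t : Finset κ} {Φ : κ → (ι → β) → M}
    (hΦ : ∀ k ∈ t, DependsOn (Φ k) (S k : Set ι)) :
    DependsOn (fun a => ∏ k ∈ t, Φ k a) (t.biUnion S : Set ι) :=
  fun _ _ h => Finset.prod_congr rfl fun k hk =>
    hΦ k hk fun x hx => h x (Finset.mem_biUnion.2 ⟨k, hk, hx⟩)

section Independence

variable {Ω ι β γ : Type*} [MeasurableSpace Ω] {μ : Measure Ω}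
  [MeasurableSpace β] [Countable β] [MeasurableSingletonClass β]
  [MeasurableSpace γ] [Nonempty γ] {A : ι → Ω → β}

theorem measurable_comp_of_dependsOn {S : Finset ι} {F : (ι → β) → γ}
    (hF : DependsOn F (S : Set ι)) (hA : ∀ i, Measurable (A i)) :
    Measurable fun ω => F fun i => A i ω := by
  obtain ⟨f, rfl⟩ := dependsOn_iff_exists_comp.1 hF
  exact (measurable_of_countable f).comp (measurable_pi_lambda _ fun i => hA i)

theorem indepFun_of_dependsOn {S T : Finset ι} (hST : Disjoint S T)
    (hA : ∀ i, Measurable (A i)) (hindep : iIndepFun A μ)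
    {F G : (ι → β) → γ} (hF : DependsOn F (S : Set ι)) (hG : DependsOn G (T : Set ι)) :
    IndepFun (fun ω => F fun i => A i ω) (fun ω => G fun i => A i ω) μ := by
  obtain ⟨f, rfl⟩ := dependsOn_iff_exists_comp.1 hF
  obtain ⟨g, rfl⟩ := dependsOn_iff_exists_comp.1 hG
  exact (hindep.indepFun_finset S T hST hA).comp (measurable_of_countable f)
    (measurable_of_countable g)

theorem lintegral_prod_eq_prod_lintegral_of_dependsOn {κ : Type*}
    (hA : ∀ i, Measurable (A i)) (hindep : iIndepFun A μ)
    {S : κ → Finset ι} {t : Finset κ} (hS : (t : Set κ).PairwiseDisjoint S)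
    {Φ : κ → (ι → β) → ℝ≥0∞} (hΦ : ∀ k ∈ t, DependsOn (Φ k) (S k : Set ι)) :
    ∫⁻ ω, ∏ k ∈ t, Φ k (fun i => A i ω) ∂μ = ∏ k ∈ t, ∫⁻ ω, Φ k (fun i => A i ω) ∂μ := by
  classical
  have := hindep.isProbabilityMeasure
  induction t using Finset.induction_on with
  | empty => simp
  | @insert k t hk ih =>
    rw [Finset.coe_insert] at hS
    have hΦt : ∀ j ∈ t, DependsOn (Φ j) (S j : Set ι) := fun j hj => hΦ j (by simp [hj])
    have hrest := dependsOn_finset_prod hΦt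
    have hdisj : Disjoint (S k) (t.biUnion S) := (Finset.disjoint_biUnion_right _ _ _).2 fun j hj =>
      hS (Set.mem_insert k _) (Set.mem_insert_of_mem _ hj) (by rintro rfl; exact hk hj)
    simp_rw [Finset.prod_insert hk]
    rw [lintegral_mul_eq_lintegral_mul_lintegral_of_indepFun''
      (measurable_comp_of_dependsOn (hΦ k (by simp)) hA).aemeasurable
      (measurable_comp_of_dependsOn hrest hA).aemeasurable
      (indepFun_of_dependsOn hdisj hA hindep (hΦ k (by simp)) hrest),
      ih (hS.subset (Set.subset_insert _ _)) hΦt]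

end Independence

theorem ofReal_exp_mul_natSub_le (ε : ℝ) (n m : ℕ) :
    ENNReal.ofReal (Real.exp (ε * ((n - m : ℕ) : ℝ))) ≤
      1 + ENNReal.ofReal (Real.exp (ε * ((n : ℝ) - m))) := by
  rcases le_total m n with h | h
  · rw [Nat.cast_sub h]
    exact le_add_self
  · simp [Nat.sub_eq_zero_of_le h]

theorem sq_div_exp_mul_one_add_div_pow_le {ε : ℝ} (hε0 : 0 ≤ ε) (hε1 : ε ≤ 1) {d : ℕ}
    (hd : 1 ≤ d) : ε ^ 2 / (Real.exp 1 * d) * (1 + ε / d) ^ d ≤ ε / d := by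
  have hd0 : (0 : ℝ) < d := by exact_mod_cast hd
  have hpow : (1 + ε / d) ^ d ≤ Real.exp ε := calc
    (1 + ε / d) ^ d ≤ Real.exp (ε / d) ^ d :=
      pow_le_pow_left₀ (by positivity) (by linarith [Real.add_one_le_exp (ε / d)]) d
    _ = Real.exp ε := by rw [← Real.exp_nat_mul, mul_div_cancel₀ _ hd0.ne']
  have hexp : ε * Real.exp ε ≤ Real.exp 1 := by
    simpa using mul_le_mul hε1 (Real.exp_le_exp.2 hε1) (Real.exp_pos ε).le zero_le_one
  calc ε ^ 2 / (Real.exp 1 * d) * (1 + ε / d) ^ d ≤ ε ^ 2 / (Real.exp 1 * d) * Real.exp ε := by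
        gcongr
    _ = ε / d * (ε * Real.exp ε / Real.exp 1) := by ring
    _ ≤ ε / d := mul_le_of_le_one_right (by positivity) ((div_le_one (Real.exp_pos 1)).2 hexp)

namespace IsRootedTree

variable {Ω : Type*} [MeasurableSpace Ω] {μ : Measure Ω} {par : V → V} {r : V}
  {A : V → Ω → ℕ}

theorem lintegral_exp_load_sub_eq_mul_prod (ht : IsRootedTree par r) (hA : ∀ v, Measurable (A v))
    (hindep : iIndepFun A μ) (B : V → ℕ) (ε : ℝ) (v : V) :
    ∫⁻ ω, ENNReal.ofReal (Real.exp (ε * ((load par B (fun i => A i ω) v : ℝ) - B v))) ∂μ =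
      (∫⁻ ω, ENNReal.ofReal (Real.exp (ε * ((A v ω : ℝ) - B v))) ∂μ) *
        ∏ u ∈ children par v,
          ∫⁻ ω, ENNReal.ofReal (Real.exp (ε * forwardF par B (fun i => A i ω) u)) ∂μ := by
  set X : (V → ℕ) → ℝ≥0∞ := fun a => ENNReal.ofReal (Real.exp (ε * ((a v : ℝ) - B v)))
  set G : V → (V → ℕ) → ℝ≥0∞ := fun u a => ENNReal.ofReal (Real.exp (ε * forwardF par B a u))
  have hsplit (a : V → ℕ) : ENNReal.ofReal (Real.exp (ε * ((load par B a v : ℝ) - B v))) =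
      X a * ∏ u ∈ children par v, G u a := by
    rw [← ENNReal.ofReal_prod_of_nonneg fun _ _ => (Real.exp_pos _).le,
      ← ENNReal.ofReal_mul (Real.exp_pos _).le, ← Real.exp_sum, ← Real.exp_add, load]
    push_cast
    rw [← Finset.mul_sum]
    ring_nf
  have hX : DependsOn X ({v} : Finset V) := fun a a' h => by
    simp only [X, h v (Finset.mem_singleton_self v)]
  have hG : ∀ u ∈ children par v, DependsOn (G u) (descendants par u : Set V) :=
    fun u _ a a' h => by simp only [G, dependsOn_forwardF par B u h]
  have hdisj : Disjoint {v} ((children par v).biUnion (descendants par)) := by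
    simpa using fun u hu => ht.notMem_descendants_of_mem_children hu
  calc _ = ∫⁻ ω, X (fun i => A i ω) * ∏ u ∈ children par v, G u (fun i => A i ω) ∂μ := by
        simp only [hsplit]
    _ = (∫⁻ ω, X (fun i => A i ω) ∂μ) * ∫⁻ ω, ∏ u ∈ children par v, G u (fun i => A i ω) ∂μ :=
        lintegral_mul_eq_lintegral_mul_lintegral_of_indepFun''
          (measurable_comp_of_dependsOn hX hA).aemeasurable
          (measurable_comp_of_dependsOn (dependsOn_finset_prod hG) hA).aemeasurable
          (indepFun_of_dependsOn hdisj hA hindep hX (dependsOn_finset_prod hG))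
    _ = _ := by
        rw [lintegral_prod_eq_prod_lintegral_of_dependsOn hA hindep
          (ht.pairwiseDisjoint_descendants v) hG]

theorem lintegral_exp_forwardF_le [IsProbabilityMeasure μ] (ht : IsRootedTree par r)
    (B : V → ℕ) (ε : ℝ) (u : V) :
    ∫⁻ ω, ENNReal.ofReal (Real.exp (ε * forwardF par B (fun i => A i ω) u)) ∂μ ≤
      1 + ∫⁻ ω, ENNReal.ofReal
        (Real.exp (ε * ((load par B (fun i => A i ω) u : ℝ) - B u))) ∂μ := by
  rw [← measure_univ (μ := μ), ← lintegral_one, ← lintegral_add_left measurable_const]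
  refine lintegral_mono fun ω => ?_
  rw [ht.forwardF_eq_load_sub]
  exact ofReal_exp_mul_natSub_le ε _ _

theorem lintegral_exp_load_sub_le (ht : IsRootedTree par r) (hA : ∀ v, Measurable (A v))
    (hindep : iIndepFun A μ) {ε : ℝ} (hε0 : 0 ≤ ε) (hε1 : ε ≤ 1) {d : ℕ} (hd : 1 ≤ d)
    (hdeg : ∀ v, (children par v).card ≤ d) (B : V → ℕ)
    (hmgf : ∀ v, ∫⁻ ω, ENNReal.ofReal (Real.exp (ε * ((A v ω : ℝ) - (B v : ℝ)))) ∂μ ≤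
      ENNReal.ofReal (ε ^ 2 / (Real.exp 1 * d)))
    (v : V) :
    ∫⁻ ω, ENNReal.ofReal (Real.exp (ε * ((load par B (fun i => A i ω) v : ℝ) - B v))) ∂μ ≤
      ENNReal.ofReal (ε / d) := by
  have := hindep.isProbabilityMeasure
  have hεd : 0 ≤ ε / d := by positivity
  have hchild : ∀ u ∈ children par v,
      ∫⁻ ω, ENNReal.ofReal (Real.exp (ε * forwardF par B (fun i => A i ω) u)) ∂μ ≤
        ENNReal.ofReal (1 + ε / d) := fun u hu => by
    -- these two facts discharge the `termination_by` obligation of the recursive call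
    have := ht.depth_of_mem_children hu
    have := ht.depth_lt_card u
    calc _ ≤ 1 + ∫⁻ ω, ENNReal.ofReal
          (Real.exp (ε * ((load par B (fun i => A i ω) u : ℝ) - B u))) ∂μ :=
          ht.lintegral_exp_forwardF_le B ε u
      _ ≤ 1 + ENNReal.ofReal (ε / d) := by
          gcongr
          exact ht.lintegral_exp_load_sub_le hA hindep hε0 hε1 hd hdeg B hmgf u
      _ = ENNReal.ofReal (1 + ε / d) := by
          rw [ENNReal.ofReal_add zero_le_one hεd, ENNReal.ofReal_one]
  calc _ = _ := ht.lintegral_exp_load_sub_eq_mul_prod hA hindep B ε v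
    _ ≤ ENNReal.ofReal (ε ^ 2 / (Real.exp 1 * d)) * ENNReal.ofReal (1 + ε / d) ^ d := by
        gcongr
        · exact hmgf v
        · calc _ ≤ ∏ u ∈ children par v, ENNReal.ofReal (1 + ε / d) := Finset.prod_le_prod' hchild
            _ ≤ _ := by
              rw [Finset.prod_const]
              exact pow_le_pow_right₀ (ENNReal.one_le_ofReal.2 (by linarith)) (hdeg v)
    _ = ENNReal.ofReal (ε ^ 2 / (Real.exp 1 * d) * (1 + ε / d) ^ d) := by
        rw [← ENNReal.ofReal_pow (by linarith), ← ENNReal.ofReal_mul (by positivity)]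
    _ ≤ ENNReal.ofReal (ε / d) :=
        ENNReal.ofReal_le_ofReal (sq_div_exp_mul_one_add_div_pow_le hε0 hε1 hd)
termination_by Fintype.card V - ht.depth v

end IsRootedTree

theorem tree_overload_prob_le_general
    {Ω : Type*} [MeasurableSpace Ω] (μ : Measure Ω)
    (ε : ℝ) (hε0 : 0 < ε) (hε : ε ≤ 1 / 2) (d : ℕ) (hd : 1 ≤ d)
    (r : V) (par : V → V) (hroot : par r = r)
    (hreach : ∀ v, ∃ n, par^[n] v = r)
    (hdeg : ∀ v, (children par v).card ≤ d)
    (B : V → ℕ)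
    (A : V → Ω → ℕ) (hAmeas : ∀ v, Measurable (A v))
    (hindep : iIndepFun A μ)
    (hmgf : ∀ v, ∫⁻ ω, ENNReal.ofReal (Real.exp (ε * ((A v ω : ℝ) - (B v : ℝ)))) ∂μ ≤
      ENNReal.ofReal (ε ^ 2 / (Real.exp 1 * d))) :
    ∀ v, μ {ω | B v ≤ load par B (fun i => A i ω) v} ≤ ENNReal.ofReal ε := by
  intro v
  have ht : IsRootedTree par r := ⟨hroot, hreach⟩
  set H : Ω → ℝ≥0∞ := fun ω =>
    ENNReal.ofReal (Real.exp (ε * ((load par B (fun i => A i ω) v : ℝ) - B v)))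
  have hH : Measurable H :=
    (measurable_of_countable fun a : V → ℕ => ENNReal.ofReal
      (Real.exp (ε * ((load par B a v : ℝ) - B v)))).comp (measurable_pi_lambda _ hAmeas)
  calc μ {ω | B v ≤ load par B (fun i => A i ω) v} ≤ μ {ω | 1 ≤ H ω} :=
        measure_mono fun ω hω => ENNReal.one_le_ofReal.2 <| Real.one_le_exp <|
          mul_nonneg hε0.le (sub_nonneg.2 (Nat.cast_le.2 hω))
    _ ≤ ∫⁻ ω, H ω ∂μ := by simpa using mul_meas_ge_le_lintegral₀ hH.aemeasurable 1
    _ ≤ ENNReal.ofReal (ε / d) :=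
        ht.lintegral_exp_load_sub_le hAmeas hindep hε0.le (by linarith) hd hdeg B hmgf v
    _ ≤ ENNReal.ofReal ε :=
        ENNReal.ofReal_le_ofReal (div_le_self hε0.le (Nat.one_le_cast.2 hd))

/-- Let `ε ∈ (0, 1/2]`, `d ≥ 1`, and let `(V, r, par)` be a finite rooted
tree in which every node has at most `d` children, with capacities `B`.  If
`(A_v)_{v ∈ V}` are mutually independent `ℕ`-valued random variables with
`E[exp(ε(A_v − B_v))] ≤ ε²/(e·d)` for all `v`, then for every node `v` the probability
that `L_v(A) ≥ B_v` is at most `ε`. -/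
theorem tree_overload_prob_le
    {Ω : Type*} [MeasurableSpace Ω] (μ : Measure Ω) [IsProbabilityMeasure μ]
    (ε : ℝ) (hε0 : 0 < ε) (hε : ε ≤ 1 / 2) (d : ℕ) (hd : 1 ≤ d)
    (r : V) (par : V → V) (hroot : par r = r)
    (hreach : ∀ v, ∃ n, par^[n] v = r)
    (hdeg : ∀ v, (children par v).card ≤ d)
    (B : V → ℕ)
    (A : V → Ω → ℕ) (hAmeas : ∀ v, Measurable (A v))
    (hindep : iIndepFun A μ)
    (hmgf : ∀ v, ∫⁻ ω, ENNReal.ofReal (Real.exp (ε * ((A v ω : ℝ) - (B v : ℝ)))) ∂μ ≤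
      ENNReal.ofReal (ε ^ 2 / (Real.exp 1 * d))) :
    ∀ v, μ {ω | B v ≤ load par B (fun i => A i ω) v} ≤ ENNReal.ofReal ε :=
  tree_overload_prob_le_general μ ε hε0 hε d hd r par hroot hreach hdeg B A hAmeas hindep hmgf
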